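/- arXiv:1807.11652 — 3 statements merged into one kernel-verified Lean document; each statement's English description precedes it below -/
import Mathlib

section
/- Let φ, ψ : [0,1] → ℝ be decreasing (antitone) functions such that ∫₀ᵗ φ(s) ds ≤ ∫₀ᵗ ψ(s) ds for all t ∈ [0,1) and ∫₀¹ φ(s) ds = ∫₀¹ ψ(s) ds. Then for every continuous convex function f : ℝ → ℝ, we have ∫₀¹ f(φ(s)) ds ≤ ∫₀¹ f(ψ(s)) ds. -/
/-!
Let `g` be the right derivative of `f`. Convexity gives `f (ψ s) ≥ f (φ s) + g (φ s) * (ψ s - φ s)`,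
and `G = g ∘ φ` is decreasing, so it suffices that `∫₀¹ G h ≥ 0` for decreasing `G` and `h = ψ - φ`,
whose primitive `H` is nonnegative on `[0,1]` and vanishes at both ends. When `G` is constant on the
cells `((k-1)/n, k/n]`, Abel summation turns `∫₀¹ G h` into `∑ (G (k/n) - G ((k+1)/n)) H (k/n) ≥ 0`.
A general decreasing `G` is continuous off a countable set, hence the a.e. limit of these step
functions, and dominated convergence concludes.
-/

open MeasureTheory Set Filter Topology

theorem ConvexOn.add_rightDeriv_mul_sub_le {S : Set ℝ} {f : ℝ → ℝ} {x y : ℝ}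
    (hf : ConvexOn ℝ S f) (hx : x ∈ interior S) (hy : y ∈ S) :
    f x + derivWithin f (Ioi x) x * (y - x) ≤ f y := by
  rcases lt_trichotomy x y with hxy | rfl | hyx
  · have h := hf.rightDeriv_le_slope_of_mem_interior hx hy hxy
    rw [slope_def_field, le_div_iff₀ (sub_pos.2 hxy)] at h
    linarith
  · simp
  · have h := (hf.slope_le_leftDeriv_of_mem_interior hy hx hyx).trans
      (hf.leftDeriv_le_rightDeriv_of_mem_interior hx)
    rw [slope_def_field, div_le_iff₀ (sub_pos.2 hyx)] at h
    linarith

theorem sub_le_sum_range_mul_sub {c H : ℕ → ℝ} {m : ℕ} (hc : ∀ k < m, c (k + 1) ≤ c k)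
    (hH : ∀ k ≤ m, 0 ≤ H k) :
    c m * H m - c 0 * H 0 ≤ ∑ k ∈ Finset.range m, c (k + 1) * (H (k + 1) - H k) := by
  induction m with
  | zero => simp
  | succ m ih =>
    rw [Finset.sum_range_succ]
    nlinarith [ih (fun k hk ↦ hc k (by omega)) (fun k hk ↦ hH k (by omega)),
      hc m (by omega), hH m (by omega)]

theorem AntitoneOn.abs_le_max {G : ℝ → ℝ} {a b x : ℝ} (hG : AntitoneOn G (Icc a b))
    (hx : x ∈ Icc a b) : |G x| ≤ max |G b| |G a| :=
  abs_le_max_abs_abs (hG hx (right_mem_Icc.2 (hx.1.trans hx.2)) hx.2)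
    (hG (left_mem_Icc.2 (hx.1.trans hx.2)) hx hx.1)

theorem IntervalIntegrable.bdd_mul_of_le {g h : ℝ → ℝ} {a b C : ℝ} (hab : a ≤ b)
    (hh : IntervalIntegrable h volume a b) (hg : AEStronglyMeasurable g (volume.restrict (Icc a b)))
    (hgC : ∀ x ∈ Icc a b, |g x| ≤ C) :
    IntervalIntegrable (fun x ↦ g x * h x) volume a b := by
  rw [intervalIntegrable_iff_integrableOn_Icc_of_le hab] at hh ⊢
  exact hh.bdd_mul hg ((ae_restrict_iff' measurableSet_Icc).2 (ae_of_all _ hgC))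

theorem AntitoneOn.intervalIntegrable_comp {u f : ℝ → ℝ} {a b : ℝ} (hab : a ≤ b)
    (hu : AntitoneOn u (Icc a b)) (hf : Continuous f) :
    IntervalIntegrable (fun x ↦ f (u x)) volume a b := by
  obtain ⟨C, hC⟩ :=
    isCompact_Icc.exists_bound_of_continuousOn (hf.continuousOn (s := Icc (u b) (u a)))
  rw [intervalIntegrable_iff_integrableOn_Icc_of_le hab]
  refine Integrable.of_bound (hf.measurable.comp_aemeasurable
    (aemeasurable_restrict_of_antitoneOn measurableSet_Icc hu)).aestronglyMeasurable C ?_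
  refine (ae_restrict_iff' measurableSet_Icc).2 (ae_of_all _ fun x hx ↦ hC _ ?_)
  exact ⟨hu hx (right_mem_Icc.2 hab) hx.2, hu (left_mem_Icc.2 hab) hx hx.1⟩

theorem natCast_div_mem_Icc {k n : ℕ} (hk : k ≤ n) : (k / n : ℝ) ∈ Icc (0 : ℝ) 1 :=
  ⟨by positivity, div_le_one_of_le₀ (by exact_mod_cast hk) n.cast_nonneg⟩

theorem ceil_mul_div_mem_Icc {s : ℝ} (hs : s ∈ Icc (0 : ℝ) 1) (n : ℕ) :
    (⌈s * n⌉₊ : ℝ) / n ∈ Icc (0 : ℝ) 1 :=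
  natCast_div_mem_Icc (Nat.ceil_le.2 (by nlinarith [hs.2, n.cast_nonneg (α := ℝ)]))

noncomputable def rightEndpointStep (G : ℝ → ℝ) (n : ℕ) (s : ℝ) : ℝ := G (⌈s * n⌉₊ / n)

section RightEndpointStep

variable {G h : ℝ → ℝ}

theorem rightEndpointStep_eq_of_mem_Ioc {n k : ℕ} (hn : 0 < n) {s : ℝ}
    (hs : s ∈ Ioc (k / n : ℝ) ((k + 1 : ℕ) / n)) :
    rightEndpointStep G n s = G ((k + 1 : ℕ) / n) := by
  have hn' : (0 : ℝ) < n := by exact_mod_cast hn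
  rw [mem_Ioc, div_lt_iff₀ hn', le_div_iff₀ hn'] at hs
  rw [rightEndpointStep, (Nat.ceil_eq_iff k.succ_ne_zero).2 ⟨by simpa using hs.1, hs.2⟩]

theorem measurable_rightEndpointStep (G : ℝ → ℝ) (n : ℕ) : Measurable (rightEndpointStep G n) :=
  (measurable_from_nat (f := fun k : ℕ ↦ G (k / n))).comp
    (Nat.measurable_ceil.comp (measurable_id.mul_const _))

theorem tendsto_rightEndpointStep {s : ℝ} (hs : s ∈ Icc (0 : ℝ) 1)
    (hG : ContinuousWithinAt G (Icc 0 1) s) :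
    Tendsto (fun n ↦ rightEndpointStep G n s) atTop (𝓝 (G s)) := by
  refine hG.tendsto.comp (tendsto_nhdsWithin_iff.2 ⟨?_, .of_forall (ceil_mul_div_mem_Icc hs)⟩)
  exact (tendsto_nat_ceil_mul_div_atTop hs.1).comp tendsto_natCast_atTop_atTop

theorem AntitoneOn.abs_rightEndpointStep_le (hG : AntitoneOn G (Icc 0 1)) (n : ℕ) {s : ℝ}
    (hs : s ∈ Icc (0 : ℝ) 1) : |rightEndpointStep G n s| ≤ max |G 1| |G 0| :=
  hG.abs_le_max (ceil_mul_div_mem_Icc hs n)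

theorem AntitoneOn.integral_rightEndpointStep_mul (hG : AntitoneOn G (Icc 0 1))
    (hh : IntervalIntegrable h volume 0 1) {n : ℕ} (hn : 0 < n) :
    ∫ s in (0 : ℝ)..1, rightEndpointStep G n s * h s =
      ∑ k ∈ Finset.range n, G ((k + 1 : ℕ) / n) *
        ((∫ s in (0 : ℝ)..((k + 1 : ℕ) / n), h s) - ∫ s in (0 : ℝ)..(k / n), h s) := by
  have hint : IntervalIntegrable (fun s ↦ rightEndpointStep G n s * h s) volume 0 1 :=
    hh.bdd_mul_of_le zero_le_one (measurable_rightEndpointStep G n).aestronglyMeasurable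
      fun s hs ↦ hG.abs_rightEndpointStep_le n hs
  have hmem : ∀ k ≤ n, (k / n : ℝ) ∈ uIcc (0 : ℝ) 1 := fun k hk ↦ by
    rw [uIcc_of_le zero_le_one]; exact natCast_div_mem_Icc hk
  have hpieces := intervalIntegral.sum_integral_adjacent_intervals (a := fun k : ℕ ↦ (k / n : ℝ))
    fun k hk ↦ hint.mono_set (uIcc_subset_uIcc (hmem k hk.le) (hmem (k + 1) hk))
  rw [Nat.cast_zero, zero_div, div_self (by positivity)] at hpieces
  rw [← hpieces]
  refine Finset.sum_congr rfl fun k hk ↦ ?_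
  have hk := Finset.mem_range.1 hk
  rw [intervalIntegral.integral_interval_sub_left (hh.mono_set (uIcc_subset_uIcc
      left_mem_uIcc (hmem (k + 1) hk))) (hh.mono_set (uIcc_subset_uIcc left_mem_uIcc
      (hmem k hk.le))), ← intervalIntegral.integral_const_mul]
  refine intervalIntegral.integral_congr_ae (ae_of_all _ fun s hs ↦ ?_)
  rw [uIoc_of_le (by gcongr; omega)] at hs
  rw [rightEndpointStep_eq_of_mem_Ioc hn hs]

theorem AntitoneOn.tendsto_integral_rightEndpointStep_mul (hG : AntitoneOn G (Icc 0 1))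
    (hh : IntervalIntegrable h volume 0 1) :
    Tendsto (fun n ↦ ∫ s in (0 : ℝ)..1, rightEndpointStep G n s * h s) atTop
      (𝓝 (∫ s in (0 : ℝ)..1, G s * h s)) := by
  have hcont : ∀ᵐ s, s ∈ Icc (0 : ℝ) 1 → ContinuousWithinAt G (Icc 0 1) s := by
    filter_upwards [measure_eq_zero_iff_ae_notMem.1
      (hG.countable_not_continuousWithinAt.measure_zero volume)] with s hs hsI
    by_contra hc
    exact hs ⟨hsI, hc⟩
  refine intervalIntegral.tendsto_integral_filter_of_dominated_convergence
    (fun s ↦ max |G 1| |G 0| * ‖h s‖)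
    (.of_forall fun n ↦ (measurable_rightEndpointStep G n).aestronglyMeasurable.mul
      hh.def'.aestronglyMeasurable)
    (.of_forall fun n ↦ ae_of_all _ fun s hs ↦ ?_) (hh.norm.const_mul _) ?_
  · rw [norm_mul, Real.norm_eq_abs]
    rw [uIoc_of_le zero_le_one] at hs
    exact mul_le_mul_of_nonneg_right (hG.abs_rightEndpointStep_le n (Ioc_subset_Icc_self hs))
      (norm_nonneg _)
  · filter_upwards [hcont] with s hs hsI
    rw [uIoc_of_le zero_le_one] at hsI
    exact (tendsto_rightEndpointStep (Ioc_subset_Icc_self hsI)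
      (hs (Ioc_subset_Icc_self hsI))).mul_const _

theorem AntitoneOn.integral_mul_nonneg (hG : AntitoneOn G (Icc 0 1))
    (hh : IntervalIntegrable h volume 0 1) (hH : ∀ t ∈ Ico (0 : ℝ) 1, 0 ≤ ∫ s in (0 : ℝ)..t, h s)
    (hH1 : ∫ s in (0 : ℝ)..1, h s = 0) :
    0 ≤ ∫ s in (0 : ℝ)..1, G s * h s := by
  refine ge_of_tendsto (hG.tendsto_integral_rightEndpointStep_mul hh)
    ((eventually_gt_atTop 0).mono fun n hn ↦ ?_)
  have hn' : (n : ℝ) ≠ 0 := by positivity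
  rw [hG.integral_rightEndpointStep_mul hh hn]
  have hc : ∀ k < n, G ((k + 1 : ℕ) / n) ≤ G (k / n) := fun k hk ↦
    hG (natCast_div_mem_Icc hk.le) (natCast_div_mem_Icc hk) (by gcongr; omega)
  have hH' : ∀ k ≤ n, 0 ≤ ∫ s in (0 : ℝ)..(k / n), h s := fun k hk ↦ by
    rcases hk.lt_or_eq with hk | rfl
    · exact hH _ ⟨by positivity, (div_lt_one (by positivity)).2 (by exact_mod_cast hk)⟩
    · rw [div_self hn', hH1]
  simpa [div_self hn', hH1] using
    sub_le_sum_range_mul_sub (c := fun k : ℕ ↦ G (k / n)) hc hH'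

end RightEndpointStep

theorem ConvexOn.antitoneOn_rightDeriv_comp {f φ : ℝ → ℝ} {S : Set ℝ} (hf : ConvexOn ℝ univ f)
    (hφ : AntitoneOn φ S) : AntitoneOn (fun s ↦ derivWithin f (Ioi (φ s)) (φ s)) S := by
  have hg : Monotone fun x ↦ derivWithin f (Ioi x) x :=
    monotoneOn_univ.1 (by simpa using hf.monotoneOn_rightDeriv)
  exact hg.comp_antitoneOn hφ

theorem ConvexOn.integral_add_rightDeriv_mul_sub_le {f φ ψ : ℝ → ℝ} {a b : ℝ} (hab : a ≤ b)
    (hf : ConvexOn ℝ univ f) (hφ : AntitoneOn φ (Icc a b)) (hψ : AntitoneOn ψ (Icc a b)) :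
    (∫ s in a..b, f (φ s)) + ∫ s in a..b, derivWithin f (Ioi (φ s)) (φ s) * (ψ s - φ s) ≤
      ∫ s in a..b, f (ψ s) := by
  have hcont : Continuous f := continuousOn_univ.1 (hf.continuousOn isOpen_univ)
  have hG := hf.antitoneOn_rightDeriv_comp hφ
  have hfφ := hφ.intervalIntegrable_comp hab hcont
  have hφi : IntervalIntegrable φ volume a b := (uIcc_of_le hab ▸ hφ).intervalIntegrable
  have hψi : IntervalIntegrable ψ volume a b := (uIcc_of_le hab ▸ hψ).intervalIntegrable
  have hGh := (hψi.sub hφi).bdd_mul_of_le hab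
    (aemeasurable_restrict_of_antitoneOn measurableSet_Icc hG).aestronglyMeasurable
    fun s hs ↦ hG.abs_le_max hs
  rw [← intervalIntegral.integral_add hfφ hGh]
  exact intervalIntegral.integral_mono_on hab (hfφ.add hGh) (hψ.intervalIntegrable_comp hab hcont)
    fun s _ ↦ hf.add_rightDeriv_mul_sub_le (by simp) (mem_univ _)

theorem hlp_majorization_general (φ ψ : ℝ → ℝ)
    (hφ : AntitoneOn φ (Set.Icc 0 1)) (hψ : AntitoneOn ψ (Set.Icc 0 1))
    (hmaj : ∀ t ∈ Set.Ico (0:ℝ) 1, ∫ s in (0:ℝ)..t, φ s ≤ ∫ s in (0:ℝ)..t, ψ s)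
    (hsum : ∫ s in (0:ℝ)..1, φ s = ∫ s in (0:ℝ)..1, ψ s)
    (f : ℝ → ℝ) (hconv : ConvexOn ℝ Set.univ f) :
    ∫ s in (0:ℝ)..1, f (φ s) ≤ ∫ s in (0:ℝ)..1, f (ψ s) := by
  have hG := hconv.antitoneOn_rightDeriv_comp hφ
  have hintegrable : ∀ t ∈ Icc (0 : ℝ) 1,
      IntervalIntegrable φ volume 0 t ∧ IntervalIntegrable ψ volume 0 t := fun t ht ↦
    have hsub : uIcc 0 t ⊆ Icc 0 1 := by rw [uIcc_of_le ht.1]; exact Icc_subset_Icc_right ht.2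
    ⟨(hφ.mono hsub).intervalIntegrable, (hψ.mono hsub).intervalIntegrable⟩
  have hprimitive : ∀ t ∈ Icc (0 : ℝ) 1,
      ∫ s in (0 : ℝ)..t, (ψ s - φ s) = (∫ s in (0 : ℝ)..t, ψ s) - ∫ s in (0 : ℝ)..t, φ s :=
    fun t ht ↦ intervalIntegral.integral_sub (hintegrable t ht).2 (hintegrable t ht).1
  have h1 : (1 : ℝ) ∈ Icc 0 1 := right_mem_Icc.2 zero_le_one
  have hkey : 0 ≤ ∫ s in (0 : ℝ)..1, derivWithin f (Ioi (φ s)) (φ s) * (ψ s - φ s) :=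
    hG.integral_mul_nonneg ((hintegrable 1 h1).2.sub (hintegrable 1 h1).1)
      (fun t ht ↦ by rw [hprimitive t (Ico_subset_Icc_self ht), sub_nonneg]; exact hmaj t ht)
      (by rw [hprimitive 1 h1, hsum, sub_self])
  linarith [hconv.integral_add_rightDeriv_mul_sub_le zero_le_one hφ hψ]

/-- **Hardy–Littlewood–Pólya majorization inequality.** If `φ` and `ψ` are decreasing
(integrable) functions on `[0,1]` such that `∫₀ᵗ φ ≤ ∫₀ᵗ ψ` for all `t ∈ [0,1)` and
`∫₀¹ φ = ∫₀¹ ψ`, then for every continuous convex `f : ℝ → ℝ` we have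
`∫₀¹ f ∘ φ ≤ ∫₀¹ f ∘ ψ`. -/
theorem hlp_majorization (φ ψ : ℝ → ℝ)
    (hφ : AntitoneOn φ (Set.Icc 0 1)) (hψ : AntitoneOn ψ (Set.Icc 0 1))
    (hφi : IntegrableOn φ (Set.Icc 0 1)) (hψi : IntegrableOn ψ (Set.Icc 0 1))
    (hmaj : ∀ t ∈ Set.Ico (0:ℝ) 1, ∫ s in (0:ℝ)..t, φ s ≤ ∫ s in (0:ℝ)..t, ψ s)
    (hsum : ∫ s in (0:ℝ)..1, φ s = ∫ s in (0:ℝ)..1, ψ s)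
    (f : ℝ → ℝ) (hconv : ConvexOn ℝ Set.univ f) (hcont : Continuous f) :
    ∫ s in (0:ℝ)..1, f (φ s) ≤ ∫ s in (0:ℝ)..1, f (ψ s) :=
  hlp_majorization_general φ ψ hφ hψ hmaj hsum f hconv
end

section
/- Let φ, ψ : [0,1] → ℝ be decreasing functions with ∫₀ᵗ φ ≤ ∫₀ᵗ ψ for all t ∈ [0,1) and ∫₀¹ φ = ∫₀¹ ψ. If f : ℝ → ℝ is strictly convex and continuous and ∫₀¹ f(φ(s)) ds = ∫₀¹ f(ψ(s)) ds, then φ = ψ almost everywhere on [0,1]. -/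
/-!
Let `g x` be the right derivative of `f` at `x`. Strict convexity gives the supporting-line
inequality `g x * (y - x) ≤ f y - f x`, strict for `y ≠ x`, so the defect
`f ∘ ψ - f ∘ φ - (g ∘ φ) * (ψ - φ)` is nonnegative and vanishes only where `φ = ψ`. Its integral is
`-∫ (g ∘ φ) * (ψ - φ)`, which is `≤ 0` by Abel summation: `g ∘ φ` is decreasing, while the partial
integrals of `ψ - φ` are nonnegative and its total integral is zero. Writing `g ∘ φ` through the
Stieltjes measure of its negative turns this into Fubini. Hence the defect vanishes almost
everywhere, and so does `ψ - φ`.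
-/

open MeasureTheory Set

namespace StrictConvexOn

variable {S : Set ℝ} {f : ℝ → ℝ} {x y : ℝ}

theorem rightDeriv_mul_sub_lt (hf : StrictConvexOn ℝ S f) (hx : x ∈ interior S) (hy : y ∈ S)
    (hyx : y ≠ x) : derivWithin f (Ioi x) x * (y - x) < f y - f x := by
  rcases hyx.lt_or_gt with hlt | hgt
  · have hslope : slope f y x < derivWithin f (Ioi x) x :=
      (hf.slope_lt_leftDeriv hy (interior_subset hx) hlt
        (hf.convexOn.differentiableWithinAt_Iio_of_mem_interior hx)).trans_le
        (hf.convexOn.leftDeriv_le_rightDeriv_of_mem_interior hx)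
    rw [slope_def_field, div_lt_iff₀ (sub_pos.2 hlt)] at hslope
    linarith
  · have hslope := hf.rightDeriv_lt_slope (interior_subset hx) hy hgt
      (hf.convexOn.differentiableWithinAt_Ioi_of_mem_interior hx)
    rw [slope_def_field, lt_div_iff₀ (sub_pos.2 hgt)] at hslope
    exact hslope

theorem ae_eq_of_integral_sub_le_integral_rightDeriv_mul {α : Type*} [MeasurableSpace α]
    {μ : Measure α} (hf : StrictConvexOn ℝ univ f) {u v : α → ℝ}
    (hfu : Integrable (fun a => f (u a)) μ) (hfv : Integrable (fun a => f (v a)) μ)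
    (hgu : Integrable (fun a => derivWithin f (Ioi (u a)) (u a) * (v a - u a)) μ)
    (hle : ∫ a, f (v a) ∂μ - ∫ a, f (u a) ∂μ ≤
      ∫ a, derivWithin f (Ioi (u a)) (u a) * (v a - u a) ∂μ) :
    u =ᵐ[μ] v := by
  set D : α → ℝ := fun a => f (v a) - f (u a) - derivWithin f (Ioi (u a)) (u a) * (v a - u a)
  have hD_pos : ∀ a, v a ≠ u a → 0 < D a := fun a hvu =>
    sub_pos.2 (hf.rightDeriv_mul_sub_lt (by simp) (mem_univ _) hvu)
  have hD_nonneg : 0 ≤ D := fun a => by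
    rcases eq_or_ne (v a) (u a) with hvu | hvu
    · simp [D, hvu]
    · exact (hD_pos a hvu).le
  have hD_int : Integrable D μ := (hfv.sub hfu).sub hgu
  have hD_zero : ∫ a, D a ∂μ = 0 := by
    refine le_antisymm ?_ (integral_nonneg hD_nonneg)
    have hsplit : ∫ a, D a ∂μ = ∫ a, f (v a) ∂μ - ∫ a, f (u a) ∂μ -
        ∫ a, derivWithin f (Ioi (u a)) (u a) * (v a - u a) ∂μ := by
      rw [← integral_sub hfv hfu]
      exact integral_sub (hfv.sub hfu) hgu
    linarith
  filter_upwards [(integral_eq_zero_iff_of_nonneg hD_nonneg hD_int).1 hD_zero] with a ha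
  by_contra huv
  exact (hD_pos a (Ne.symm huv)).ne' ha

end StrictConvexOn

theorem Monotone.stieltjesFunction_ae_eq {m : ℝ → ℝ} (hm : Monotone m) (μ : Measure ℝ)
    [NullSingletonClass μ] : ⇑hm.stieltjesFunction =ᵐ[μ] m := by
  refine measure_mono_null (fun x hx => ?_) (hm.countable_not_continuousAt.measure_zero μ)
  exact fun hcont => hx (rightLim_eq_of_tendsto (hcont.tendsto.mono_left nhdsWithin_le_nhds))

theorem setIntegral_measureReal_Ioi_mul_nonneg (μ ν : Measure ℝ) [SFinite μ] [IsFiniteMeasure ν]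
    {s : Set ℝ} {h : ℝ → ℝ} (hh : IntegrableOn h s μ)
    (hpart : ∀ᵐ t ∂ν, 0 ≤ ∫ x in s ∩ Iio t, h x ∂μ) :
    0 ≤ ∫ x in s, ν.real (Ioi x) * h x ∂μ := by
  set F : ℝ × ℝ → ℝ := {z | z.1 < z.2}.indicator fun z => h z.1
  have hF : Integrable F ((μ.restrict s).prod ν) :=
    (hh.comp_fst ν).indicator (measurableSet_lt measurable_fst measurable_snd)
  have hswap := integral_integral_swap (f := fun x t => F (x, t)) hF
  have hinner_t : ∀ x, ∫ t, F (x, t) ∂ν = ν.real (Ioi x) * h x := fun x => by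
    rw [← smul_eq_mul, ← integral_indicator_const _ measurableSet_Ioi]
    rfl
  have hinner_x : ∀ t, ∫ x, F (x, t) ∂μ.restrict s = ∫ x in s ∩ Iio t, h x ∂μ := fun t => by
    rw [inter_comm, ← Measure.restrict_restrict measurableSet_Iio,
      ← integral_indicator measurableSet_Iio]
    rfl
  simp only [hinner_t, hinner_x] at hswap
  rw [hswap]
  exact integral_nonneg_of_ae hpart

theorem intervalIntegral.integral_antitoneOn_mul_nonneg {a b : ℝ} (hab : a ≤ b) {w h : ℝ → ℝ}
    (hw : AntitoneOn w (Icc a b)) (hh : IntegrableOn h (Icc a b))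
    (hpart : ∀ t ∈ Ioo a b, 0 ≤ ∫ s in a..t, h s) (htot : ∫ s in a..b, h s = 0) :
    0 ≤ ∫ s in a..b, w s * h s := by
  set W : ℝ → ℝ := fun x => w (projIcc a b hab x)
  have hW : Antitone W := fun x y hxy =>
    hw (projIcc a b hab x).2 (projIcc a b hab y).2 (monotone_projIcc hab hxy)
  have hWw : EqOn W w (Icc a b) := fun x hx => by simp only [W, projIcc_of_mem hab hx]
  set G := hW.neg.stieltjesFunction
  set ν := G.measure.restrict (Ioc a b)
  have : IsFiniteMeasure ν := isFiniteMeasure_restrict.2 (by simp [G.measure_Ioc])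
  have hν : ∀ x ∈ Icc a b, ν.real (Ioi x) = G b - G x := fun x hx => by
    have hIoi : Ioi x ∩ Ioc a b = Ioc x b :=
      ext fun y => ⟨fun ⟨h1, _, h3⟩ => ⟨h1, h3⟩, fun ⟨h1, h2⟩ => ⟨h1, hx.1.trans_lt h1, h2⟩⟩
    rw [measureReal_def, Measure.restrict_apply measurableSet_Ioi, hIoi, G.measure_Ioc,
      ENNReal.toReal_ofReal (sub_nonneg.2 (G.mono hx.2))]
  have hq : IntegrableOn (fun s => ν.real (Ioi s) * h s) (Icc a b) :=
    hh.mul_of_top_right <| AntitoneOn.memLp_isCompact isCompact_Icc fun x _ y _ hxy =>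
      measureReal_mono (Ioi_subset_Ioi hxy)
  have hpartν : ∀ᵐ t ∂ν, 0 ≤ ∫ x in Icc a b ∩ Iio t, h x := by
    filter_upwards [ae_restrict_mem measurableSet_Ioc] with t ht
    have hIco : Icc a b ∩ Iio t = Ico a t :=
      ext fun y => ⟨fun ⟨⟨h1, _⟩, h3⟩ => ⟨h1, h3⟩,
        fun ⟨h1, h2⟩ => ⟨⟨h1, (h2.trans_le ht.2).le⟩, h2⟩⟩
    rw [hIco, integral_Ico_eq_integral_Ioo, ← integral_Ioc_eq_integral_Ioo,
      ← intervalIntegral.integral_of_le ht.1.le]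
    rcases ht.2.eq_or_lt with rfl | hlt
    · exact htot.ge
    · exact hpart t ⟨ht.1, hlt⟩
  calc ∫ s in a..b, w s * h s = ∫ s in Icc a b, (-G b * h s + ν.real (Ioi s) * h s) := by
        rw [intervalIntegral.integral_of_le hab, ← integral_Icc_eq_integral_Ioc]
        refine setIntegral_congr_ae measurableSet_Icc ?_
        filter_upwards [hW.neg.stieltjesFunction_ae_eq volume] with s hs hmem
        rw [hν s hmem, ← hWw hmem, hs]
        ring
    _ = -G b * (∫ s in a..b, h s) + ∫ s in Icc a b, ν.real (Ioi s) * h s := by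
        rw [MeasureTheory.integral_add (hh.const_mul _) hq, MeasureTheory.integral_const_mul,
          intervalIntegral.integral_of_le hab, integral_Icc_eq_integral_Ioc]
    _ = ∫ s in Icc a b, ν.real (Ioi s) * h s := by rw [htot, mul_zero, zero_add]
    _ ≥ 0 := setIntegral_measureReal_Ioi_mul_nonneg volume ν hh hpartν

theorem hlp_majorization_eq_case_general (φ ψ : ℝ → ℝ)
    (hφ : AntitoneOn φ (Set.Icc 0 1))
    (hφi : IntegrableOn φ (Set.Icc 0 1)) (hψi : IntegrableOn ψ (Set.Icc 0 1))
    (hmaj : ∀ t ∈ Set.Ico (0:ℝ) 1, ∫ s in (0:ℝ)..t, φ s ≤ ∫ s in (0:ℝ)..t, ψ s)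
    (hsum : ∫ s in (0:ℝ)..1, φ s = ∫ s in (0:ℝ)..1, ψ s)
    (f : ℝ → ℝ) (hconv : StrictConvexOn ℝ Set.univ f)
    (hfφi : IntegrableOn (fun s => f (φ s)) (Set.Icc 0 1))
    (hfψi : IntegrableOn (fun s => f (ψ s)) (Set.Icc 0 1))
    (heq : ∫ s in (0:ℝ)..1, f (φ s) = ∫ s in (0:ℝ)..1, f (ψ s)) :
    ∀ᵐ s ∂(volume.restrict (Set.Icc (0:ℝ) 1)), φ s = ψ s := by
  have hIcc (F : ℝ → ℝ) : ∫ s in (0:ℝ)..1, F s = ∫ s in Icc (0:ℝ) 1, F s := by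
    rw [intervalIntegral.integral_of_le zero_le_one, integral_Icc_eq_integral_Ioc]
  have hii {F : ℝ → ℝ} (hF : IntegrableOn F (Icc 0 1)) (t : ℝ) (ht : t ∈ Icc (0:ℝ) 1) :
      IntervalIntegrable F volume 0 t :=
    (intervalIntegrable_iff_integrableOn_Icc_of_le ht.1).2
      (hF.mono_set (Icc_subset_Icc_right ht.2))
  set w : ℝ → ℝ := fun s => derivWithin f (Ioi (φ s)) (φ s)
  have hw : AntitoneOn w (Icc 0 1) := by
    have hg := hconv.convexOn.monotoneOn_rightDeriv
    rw [interior_univ, monotoneOn_univ] at hg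
    exact hg.comp_antitoneOn hφ
  have hpart : ∀ t ∈ Ioo (0:ℝ) 1, 0 ≤ ∫ s in (0:ℝ)..t, (ψ s - φ s) := fun t ht => by
    rw [intervalIntegral.integral_sub (hii hψi t (Ioo_subset_Icc_self ht))
      (hii hφi t (Ioo_subset_Icc_self ht))]
    exact sub_nonneg.2 (hmaj t (Ioo_subset_Ico_self ht))
  have htot : ∫ s in (0:ℝ)..1, (ψ s - φ s) = 0 := by
    rw [intervalIntegral.integral_sub (hii hψi 1 (right_mem_Icc.2 zero_le_one))
      (hii hφi 1 (right_mem_Icc.2 zero_le_one)), hsum, sub_self]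
  have habel :=
    intervalIntegral.integral_antitoneOn_mul_nonneg zero_le_one hw (hψi.sub hφi) hpart htot
  refine hconv.ae_eq_of_integral_sub_le_integral_rightDeriv_mul hfφi hfψi
    ((hψi.sub hφi).mul_of_top_right (hw.memLp_isCompact isCompact_Icc)) ?_
  rw [← hIcc, ← hIcc, ← hIcc, heq, sub_self]
  exact habel

/-- **Equality case of the Hardy–Littlewood–Pólya majorization inequality.** With `φ, ψ`
decreasing integrable on `[0,1]`, majorization `∫₀ᵗ φ ≤ ∫₀ᵗ ψ` on `[0,1)` and
`∫₀¹ φ = ∫₀¹ ψ`, if `f` is strictly convex and continuous with `f ∘ φ, f ∘ ψ` integrable and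
`∫₀¹ f ∘ φ = ∫₀¹ f ∘ ψ`, then `φ = ψ` almost everywhere on `[0,1]`. -/
theorem hlp_majorization_eq_case (φ ψ : ℝ → ℝ)
    (hφ : AntitoneOn φ (Set.Icc 0 1)) (hψ : AntitoneOn ψ (Set.Icc 0 1))
    (hφi : IntegrableOn φ (Set.Icc 0 1)) (hψi : IntegrableOn ψ (Set.Icc 0 1))
    (hmaj : ∀ t ∈ Set.Ico (0:ℝ) 1, ∫ s in (0:ℝ)..t, φ s ≤ ∫ s in (0:ℝ)..t, ψ s)
    (hsum : ∫ s in (0:ℝ)..1, φ s = ∫ s in (0:ℝ)..1, ψ s)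
    (f : ℝ → ℝ) (hconv : StrictConvexOn ℝ Set.univ f) (hcont : Continuous f)
    (hfφi : IntegrableOn (fun s => f (φ s)) (Set.Icc 0 1))
    (hfψi : IntegrableOn (fun s => f (ψ s)) (Set.Icc 0 1))
    (heq : ∫ s in (0:ℝ)..1, f (φ s) = ∫ s in (0:ℝ)..1, f (ψ s)) :
    ∀ᵐ s ∂(volume.restrict (Set.Icc (0:ℝ) 1)), φ s = ψ s :=
  hlp_majorization_eq_case_general φ ψ hφ hφi hψi hmaj hsum f hconv hfφi hfψi heq
end

section
/- Let x, y be n×n Hermitian complex matrices with 0 ≤ x ≤ y (Loewner order) and let f : [0,∞) → ℝ be a strictly monotone increasing continuous function. Then Tr(f(x)) ≤ Tr(f(y)), with equality if and only if x = y. -/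
open Matrix
open scoped ComplexOrder

/-- The absolute value `|x| = (xᴴ x)^(1/2)` of a complex matrix. -/
noncomputable def matAbs {m : Type*} [Fintype m] [DecidableEq m] (x : Matrix m m ℂ) : Matrix m m ℂ :=
  ((Matrix.posSemidef_conjTranspose_mul_self x).1.eigenvectorUnitary : Matrix m m ℂ) *
    Matrix.diagonal ((↑) ∘ Real.sqrt ∘ (Matrix.posSemidef_conjTranspose_mul_self x).1.eigenvalues) *
    (star (Matrix.posSemidef_conjTranspose_mul_self x).1.eigenvectorUnitary : Matrix m m ℂ)

theorem matAbs_herm {m : Type*} [Fintype m] [DecidableEq m] (x : Matrix m m ℂ) :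
    (matAbs x).IsHermitian := by
  unfold matAbs Matrix.IsHermitian
  simp [Matrix.conjTranspose_mul, Matrix.diagonal_conjTranspose, mul_assoc,
    Matrix.star_eq_conjTranspose, Pi.star_def, Complex.conj_ofReal, Function.comp_def]

/-- Functional calculus for a Hermitian matrix: apply `f : ℝ → ℝ` to the eigenvalues. -/
noncomputable def herCFC {m : Type*} [Fintype m] [DecidableEq m] (x : Matrix m m ℂ)
    (hx : x.IsHermitian) (f : ℝ → ℝ) : Matrix m m ℂ :=
  (hx.eigenvectorUnitary : Matrix m m ℂ) *
    Matrix.diagonal (fun i => (f (hx.eigenvalues i) : ℂ)) *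
    star (hx.eigenvectorUnitary : Matrix m m ℂ)

theorem herCFC_herm {m : Type*} [Fintype m] [DecidableEq m] (x : Matrix m m ℂ)
    (hx : x.IsHermitian) (f : ℝ → ℝ) : (herCFC x hx f).IsHermitian := by
  unfold herCFC Matrix.IsHermitian
  simp [Matrix.conjTranspose_mul, Matrix.diagonal_conjTranspose, mul_assoc,
    Matrix.star_eq_conjTranspose, Pi.star_def, Complex.conj_ofReal]

/-- The power `|x|^p` of the absolute value of a matrix, via functional calculus. -/
noncomputable def matAbsPow {m : Type*} [Fintype m] [DecidableEq m] (x : Matrix m m ℂ) (p : ℝ) :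
    Matrix m m ℂ :=
  herCFC (matAbs x) (matAbs_herm x) (fun t => t ^ p)

theorem matAbsPow_herm {m : Type*} [Fintype m] [DecidableEq m] (x : Matrix m m ℂ) (p : ℝ) :
    (matAbsPow x p).IsHermitian :=
  herCFC_herm _ _ _

/-- Rearrangement of a tuple of reals in decreasing order. -/
noncomputable def sortDesc {n : ℕ} (f : Fin n → ℝ) : Fin n → ℝ :=
  fun i => f (Tuple.sort f i.rev)

/-- Decreasingly ordered eigenvalues of a Hermitian matrix. -/
noncomputable def eigsDesc {n : ℕ} {x : Matrix (Fin n) (Fin n) ℂ} (hx : x.IsHermitian) :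
    Fin n → ℝ :=
  sortDesc hx.eigenvalues

/-- Decreasingly ordered singular values of a complex matrix. -/
noncomputable def svalsDesc {n : ℕ} (x : Matrix (Fin n) (Fin n) ℂ) : Fin n → ℝ :=
  eigsDesc (matAbs_herm x)

/-! Weyl's monotonicity principle: if `T ≤ S`, the `k`-th largest eigenvalue of `T` is at most that
of `S`, because the span of the top `k + 1` eigenvectors of `T` and the span of the bottom `n - k`
eigenvectors of `S` meet in some `v ≠ 0`, and `λₖ(T) ‖v‖² ≤ ⟪v, T v⟫ ≤ ⟪v, S v⟫ ≤ λₖ(S) ‖v‖²`.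
Summing `f` over the sorted eigenvalues gives the trace inequality. In the equality case the
injectivity of `f` forces equal eigenvalues, so `Tr (y - x) = 0`, and a positive semidefinite matrix
with zero trace vanishes. -/

open Module Submodule
open scoped InnerProductSpace

section SumComp

variable {ι α β : Type*} [Fintype ι] [LinearOrder α] [AddCommMonoid β] [PartialOrder β]
  [IsOrderedCancelAddMonoid β] {s : Set α} {f : α → β} {a b : ι → α}

lemma MonotoneOn.sum_comp_le_sum_comp (hf : MonotoneOn f s) (ha : ∀ i, a i ∈ s)
    (hb : ∀ i, b i ∈ s) (hab : a ≤ b) : ∑ i, f (a i) ≤ ∑ i, f (b i) :=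
  Finset.sum_le_sum fun i _ => hf (ha i) (hb i) (hab i)

lemma StrictMonoOn.sum_comp_eq_sum_comp_iff (hf : StrictMonoOn f s) (ha : ∀ i, a i ∈ s)
    (hb : ∀ i, b i ∈ s) (hab : a ≤ b) : ∑ i, f (a i) = ∑ i, f (b i) ↔ a = b := by
  refine ⟨fun h => funext fun i => ?_, fun h => h ▸ rfl⟩
  have hle : ∀ i ∈ Finset.univ, f (a i) ≤ f (b i) := fun i _ => hf.monotoneOn (ha i) (hb i) (hab i)
  exact hf.injOn (ha i) (hb i) ((Finset.sum_eq_sum_iff_of_le hle).mp h i (Finset.mem_univ i))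

end SumComp

variable {𝕜 E : Type*} [RCLike 𝕜] [NormedAddCommGroup E] [InnerProductSpace 𝕜 E]

namespace OrthonormalBasis

variable {ι : Type*} [Fintype ι] (B : OrthonormalBasis ι 𝕜 E)

lemma repr_eq_zero_of_mem_span_image {s : Set ι} {v : E} (hv : v ∈ span 𝕜 (B '' s)) {i : ι}
    (hi : i ∉ s) : B.repr v i = 0 := by
  rw [← B.coe_toBasis] at hv
  rw [← B.coe_toBasis_repr_apply, ← Finsupp.notMem_support_iff]
  exact fun h => hi (B.toBasis.repr_support_subset_of_mem_span s hv h)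

lemma finrank_span_image (s : Finset ι) :
    finrank 𝕜 (span 𝕜 (B '' s)) = s.card := by
  rw [Set.image_eq_range, finrank_span_eq_card]
  · simp
  · exact B.orthonormal.linearIndependent.comp _ Subtype.val_injective

lemma mul_norm_sq_le_sum_of_mem_span_image {μ : ι → ℝ} {s : Set ι} {c : ℝ}
    (hc : ∀ i ∈ s, c ≤ μ i) {v : E} (hv : v ∈ span 𝕜 (B '' s)) :
    c * ‖v‖ ^ 2 ≤ ∑ i, μ i * ‖B.repr v i‖ ^ 2 := by
  rw [← B.repr.norm_map, EuclideanSpace.norm_sq_eq, Finset.mul_sum]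
  refine Finset.sum_le_sum fun i _ => ?_
  by_cases hi : i ∈ s
  · exact mul_le_mul_of_nonneg_right (hc i hi) (sq_nonneg _)
  · simp [B.repr_eq_zero_of_mem_span_image hv hi]

lemma sum_le_mul_norm_sq_of_mem_span_image {μ : ι → ℝ} {s : Set ι} {c : ℝ}
    (hc : ∀ i ∈ s, μ i ≤ c) {v : E} (hv : v ∈ span 𝕜 (B '' s)) :
    ∑ i, μ i * ‖B.repr v i‖ ^ 2 ≤ c * ‖v‖ ^ 2 := by
  have h := B.mul_norm_sq_le_sum_of_mem_span_image (μ := -μ) (c := -c)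
    (fun i hi => neg_le_neg (hc i hi)) hv
  simpa only [Pi.neg_apply, neg_mul, Finset.sum_neg_distrib, neg_le_neg_iff] using h

end OrthonormalBasis

namespace LinearMap.IsSymmetric

variable [FiniteDimensional 𝕜 E] {n : ℕ} {T S : E →ₗ[𝕜] E}

lemma re_inner_apply_self_eq_sum (hT : T.IsSymmetric) (hn : finrank 𝕜 E = n) (v : E) :
    RCLike.re ⟪v, T v⟫_𝕜 = ∑ i, hT.eigenvalues hn i * ‖(hT.eigenvectorBasis hn).repr v i‖ ^ 2 := by
  set B := hT.eigenvectorBasis hn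
  rw [← B.repr.inner_map_map, PiLp.inner_apply, map_sum]
  refine Finset.sum_congr rfl fun i _ => ?_
  rw [hT.eigenvectorBasis_apply_self_apply, RCLike.inner_apply, mul_assoc, RCLike.mul_conj,
    ← RCLike.ofReal_pow, ← RCLike.ofReal_mul, RCLike.ofReal_re]

theorem eigenvalues_le_eigenvalues_of_le (hT : T.IsSymmetric) (hS : S.IsSymmetric)
    (hn : finrank 𝕜 E = n) (hTS : T ≤ S) (k : Fin n) :
    hT.eigenvalues hn k ≤ hS.eigenvalues hn k := by
  set BT := hT.eigenvectorBasis hn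
  set BS := hS.eigenvectorBasis hn
  obtain ⟨v, ⟨hvT, hvS⟩, hv⟩ : ∃ v ∈ span 𝕜 (BT '' ↑(Finset.Iic k)) ⊓
      span 𝕜 (BS '' ↑(Finset.Ici k)), v ≠ 0 := by
    refine Submodule.exists_mem_ne_zero_of_ne_bot fun h => ?_
    have := Submodule.finrank_add_finrank_le_of_disjoint (disjoint_iff.mpr h)
    rw [BT.finrank_span_image, BS.finrank_span_image, Fin.card_Iic, Fin.card_Ici, hn] at this
    omega
  have hTv : hT.eigenvalues hn k * ‖v‖ ^ 2 ≤ RCLike.re ⟪v, T v⟫_𝕜 := by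
    rw [hT.re_inner_apply_self_eq_sum hn]
    exact BT.mul_norm_sq_le_sum_of_mem_span_image
      (fun i hi => hT.eigenvalues_antitone hn (by simpa using hi)) hvT
  have hSv : RCLike.re ⟪v, S v⟫_𝕜 ≤ hS.eigenvalues hn k * ‖v‖ ^ 2 := by
    rw [hS.re_inner_apply_self_eq_sum hn]
    exact BS.sum_le_mul_norm_sq_of_mem_span_image
      (fun i hi => hS.eigenvalues_antitone hn (by simpa using hi)) hvS
  have hTSv : RCLike.re ⟪v, T v⟫_𝕜 ≤ RCLike.re ⟪v, S v⟫_𝕜 := by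
    have := hTS.re_inner_nonneg_right v
    rwa [LinearMap.sub_apply, inner_sub_right, map_sub, sub_nonneg] at this
  exact le_of_mul_le_mul_right (hTv.trans (hTSv.trans hSv)) (pow_pos (norm_pos_iff.mpr hv) 2)

end LinearMap.IsSymmetric

namespace Matrix

variable {m : Type*} [Fintype m] [DecidableEq m] {A B : Matrix m m 𝕜}

lemma IsHermitian.eigenvalues₀_le_eigenvalues₀ (hA : A.IsHermitian) (hB : B.IsHermitian)
    (hAB : (B - A).PosSemidef) : hA.eigenvalues₀ ≤ hB.eigenvalues₀ :=
  LinearMap.IsSymmetric.eigenvalues_le_eigenvalues_of_le _ _ _ <| by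
    rwa [LinearMap.le_def, ← map_sub, isPositive_toEuclideanLin_iff]

lemma PosSemidef.eigenvalues₀_nonneg (hA : A.PosSemidef) (j : Fin (Fintype.card m)) :
    0 ≤ hA.1.eigenvalues₀ j :=
  (isPositive_toEuclideanLin_iff.mpr hA).nonneg_eigenvalues _ j

lemma IsHermitian.sum_comp_eigenvalues {M : Type*} [AddCommMonoid M] (hA : A.IsHermitian)
    (g : ℝ → M) : ∑ i, g (hA.eigenvalues i) = ∑ j, g (hA.eigenvalues₀ j) :=
  Equiv.sum_comp (Fintype.equivOfCardEq (Fintype.card_fin _)).symm (g ∘ hA.eigenvalues₀)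

end Matrix

lemma trace_herCFC {m : Type*} [Fintype m] [DecidableEq m] (x : Matrix m m ℂ) (hx : x.IsHermitian)
    (f : ℝ → ℝ) : (herCFC x hx f).trace = ∑ i, (f (hx.eigenvalues i) : ℂ) := by
  rw [herCFC, trace_mul_cycle, Unitary.coe_star_mul_self, one_mul, trace_diagonal]

lemma re_trace_herCFC {m : Type*} [Fintype m] [DecidableEq m] (x : Matrix m m ℂ)
    (hx : x.IsHermitian) (f : ℝ → ℝ) :
    (herCFC x hx f).trace.re = ∑ j, f (hx.eigenvalues₀ j) := by
  rw [trace_herCFC, Complex.re_sum, hx.sum_comp_eigenvalues fun t => (f t : ℂ).re]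
  simp only [Complex.ofReal_re]

theorem trace_cfc_le_of_loewner_le_general (n : ℕ) (x y : Matrix (Fin n) (Fin n) ℂ)
    (hx : x.PosSemidef) (hy : y.PosSemidef) (hxy : (y - x).PosSemidef)
    (f : ℝ → ℝ) (hmono : StrictMonoOn f (Set.Ici 0)) :
    (herCFC x hx.1 f).trace.re ≤ (herCFC y hy.1 f).trace.re ∧
    ((herCFC x hx.1 f).trace.re = (herCFC y hy.1 f).trace.re ↔ x = y) := by
  have hle := hx.1.eigenvalues₀_le_eigenvalues₀ hy.1 hxy
  rw [re_trace_herCFC, re_trace_herCFC]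
  refine ⟨hmono.monotoneOn.sum_comp_le_sum_comp hx.eigenvalues₀_nonneg hy.eigenvalues₀_nonneg hle,
    ?_⟩
  rw [hmono.sum_comp_eq_sum_comp_iff hx.eigenvalues₀_nonneg hy.eigenvalues₀_nonneg hle]
  refine ⟨fun heig => ?_, fun h => h ▸ rfl⟩
  have htrace : (y - x).trace = 0 := by
    rw [trace_sub, hx.1.trace_eq_sum_eigenvalues, hy.1.trace_eq_sum_eigenvalues,
      hx.1.sum_comp_eigenvalues, hy.1.sum_comp_eigenvalues, heig, sub_self]
  exact (sub_eq_zero.mp (hxy.trace_eq_zero_iff.mp htrace)).symm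

/-- Let `0 ≤ x ≤ y` be Hermitian matrices and `f` a strictly increasing continuous function on
`[0,∞)`. Then `Tr f(x) ≤ Tr f(y)`, with equality if and only if `x = y`. -/
theorem trace_cfc_le_of_loewner_le (n : ℕ) (x y : Matrix (Fin n) (Fin n) ℂ)
    (hx : x.PosSemidef) (hy : y.PosSemidef) (hxy : (y - x).PosSemidef)
    (f : ℝ → ℝ) (hmono : StrictMonoOn f (Set.Ici 0)) (hcont : ContinuousOn f (Set.Ici 0)) :
    (herCFC x hx.1 f).trace.re ≤ (herCFC y hy.1 f).trace.re ∧
    ((herCFC x hx.1 f).trace.re = (herCFC y hy.1 f).trace.re ↔ x = y) :=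
  trace_cfc_le_of_loewner_le_general n x y hx hy hxy f hmono
end
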